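/- arXiv:2404.02784 — 6 statements merged into one kernel-verified Lean document; each statement's English description precedes it below -/
import Mathlib

section
/- Consider n jobs on a single machine, each job J with processing time p(J) > 0 and due date d(J). Scheduling the jobs in non-decreasing order of due dates (EDD order) minimizes the maximum tardiness T_max = max_J max(0, C(J) − d(J)) over all schedules (i.e., over all bijections σ from [n] to the job set, where C(σ(i)) = Σ_{i'≤i} p(σ(i'))). -/
/-- The completion time of job `J` in the schedule `σ` (a bijection from positions
`Fin N` to jobs): the sum of the processing times of all jobs scheduled at positions
up to and including the position of `J`. -/
def completionTime {N : ℕ} (p : Fin N → ℕ) (σ : Equiv.Perm (Fin N)) (J : Fin N) : ℕ :=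
  ∑ k ∈ Finset.univ.filter (fun k' => k' ≤ σ.symm J), p (σ k)

/-- Jackson's rule: scheduling jobs in non-decreasing order of due dates (EDD)
minimizes the maximum tardiness `T_max = max_J max(0, C(J) − d(J))` over all
schedules. -/
theorem stmt4 {N : ℕ} (p d : Fin N → ℕ) (hp : ∀ J, 0 < p J)
    (edd : Equiv.Perm (Fin N)) (hedd : Monotone fun k => d (edd k))
    (σ : Equiv.Perm (Fin N)) :
    Finset.univ.sup (fun J => completionTime p edd J - d J) ≤
      Finset.univ.sup (fun J => completionTime p σ J - d J) := by
  apply Finset.sup_le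
  intro J _
  set k := edd.symm J with hk
  have hJ : edd k = J := edd.apply_symm_apply J
  set T : Finset (Fin N) :=
    (Finset.univ.filter (fun k' => k' ≤ k)).image (fun i => σ.symm (edd i)) with hT
  have hTne : T.Nonempty := ⟨σ.symm (edd k), Finset.mem_image_of_mem _ (by simp)⟩
  set m := T.max' hTne with hm
  obtain ⟨i, hi, him⟩ := Finset.mem_image.mp (T.max'_mem hTne)
  have hik : i ≤ k := (Finset.mem_filter.mp hi).2
  have hσm : σ m = edd i := by rw [hm, ← him]; simp
  have hd : d (σ m) ≤ d J := by rw [hσm, ← hJ]; exact hedd hik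
  have hC : completionTime p edd J ≤ completionTime p σ (σ m) := by
    unfold completionTime
    rw [Equiv.symm_apply_apply]
    calc ∑ k' ∈ Finset.univ.filter (fun k' => k' ≤ edd.symm J), p (edd k')
        = ∑ k' ∈ T, p (σ k') := by
          rw [hT, Finset.sum_image (fun a _ b _ h => edd.injective (σ.symm.injective h))]
          simp [← hk]
      _ ≤ ∑ k' ∈ Finset.univ.filter (fun k' => k' ≤ m), p (σ k') := by
          apply Finset.sum_le_sum_of_subset
          intro x hx
          simp only [Finset.mem_filter, Finset.mem_univ, true_and]
          exact T.le_max' x hx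
  calc completionTime p edd J - d J
      ≤ completionTime p σ (σ m) - d (σ m) := tsub_le_tsub hC hd
    _ ≤ _ := Finset.le_sup (f := fun J => completionTime p σ J - d J) (Finset.mem_univ (σ m))
end

section
/- Let 𝒥 be a set of n jobs with processing times p(J) and due dates d(J), let P = Σ_{J∈𝒥} p(J), and let 0 ≤ ℓ < P with d(J) ≤ P for every J ∈ 𝒥. Add a new job J* with p(J*) = P and d(J*) = 2P − ℓ, and suppose there exists a schedule of 𝒥 with maximum tardiness at most ℓ. Then: (a) every schedule of 𝒥 ∪ {J*} has maximum tardiness at least ℓ, and the minimum is exactly ℓ, attained only by schedules that place J* last; (b) for any k, the instance 𝒥 ∪ {J*} admits a schedule that simultaneously has maximum tardiness ℓ (the minimum) and at most k+1 tardy jobs if and only if 𝒥 admits a schedule with maximum tardiness at most ℓ and at most k tardy jobs. -/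
open Finset Equiv

namespace Equiv

lemma optionCongr_removeNone {α : Type*} {e : Perm (Option α)} (h : e none = none) :
    (removeNone e).optionCongr = e := by
  ext1 (_ | i)
  · simp [h]
  · have hi : ∃ j, e (some i) = some j :=
      Option.ne_none_iff_exists'.mp fun hi => Option.some_ne_none i (e.injective (hi.trans h.symm))
    simp [removeNone_some e hi]

end Equiv

def maxTardiness {N : ℕ} (p d : Fin N → ℕ) (σ : Perm (Fin N)) : ℕ :=
  univ.sup fun J => completionTime p σ J - d J

def numTardy {N : ℕ} (p d : Fin N → ℕ) (σ : Perm (Fin N)) : ℕ :=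
  (univ.filter fun J => d J < completionTime p σ J).card

section Schedule

variable {N : ℕ} (p d : Fin N → ℕ) (σ : Perm (Fin N))

lemma completionTime_sub_le_maxTardiness (J : Fin N) :
    completionTime p σ J - d J ≤ maxTardiness p d σ :=
  le_sup (f := fun J => completionTime p σ J - d J) (mem_univ J)

lemma numTardy_eq_zero_of_maxTardiness_eq_zero (h : maxTardiness p d σ = 0) :
    numTardy p d σ = 0 := by
  refine card_eq_zero.mpr (filter_eq_empty_iff.mpr fun J _ => ?_)
  have := completionTime_sub_le_maxTardiness p d σ J
  omega

lemma completionTime_apply_last (q : Fin (N + 1) → ℕ) (σ : Perm (Fin (N + 1))) :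
    completionTime q σ (σ (Fin.last N)) = ∑ J, q J := by
  rw [completionTime, symm_apply_apply, filter_true_of_mem fun k _ => Fin.le_last k]
  exact Equiv.sum_comp σ q

end Schedule

def extendLast {n : ℕ} (τ : Perm (Fin n)) : Perm (Fin (n + 1)) :=
  finSuccEquivLast.symm.permCongr τ.optionCongr

section ExtendLast

variable {n : ℕ} (τ : Perm (Fin n))

@[simp] lemma extendLast_castSucc (i : Fin n) : extendLast τ i.castSucc = (τ i).castSucc := by
  simp [extendLast, permCongr_apply]

@[simp] lemma extendLast_last : extendLast τ (Fin.last n) = Fin.last n := by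
  simp [extendLast, permCongr_apply]

lemma exists_extendLast_eq {σ : Perm (Fin (n + 1))} (h : σ (Fin.last n) = Fin.last n) :
    ∃ τ, extendLast τ = σ := by
  refine ⟨removeNone (finSuccEquivLast.permCongr σ), ?_⟩
  rw [extendLast, optionCongr_removeNone (by simp [permCongr_apply, h])]
  ext1 i
  simp [permCongr_apply]

variable (p d : Fin n → ℕ) (P D : ℕ)

lemma completionTime_extendLast_castSucc (J : Fin n) :
    completionTime (Fin.snoc p P : Fin (n + 1) → ℕ) (extendLast τ) J.castSucc =
      completionTime p τ J := by
  have hpos : (extendLast τ).symm J.castSucc = (τ.symm J).castSucc := by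
    rw [symm_apply_eq, extendLast_castSucc, apply_symm_apply]
  simp only [completionTime, sum_filter, hpos, Fin.sum_univ_castSucc, Fin.castSucc_le_castSucc_iff,
    extendLast_castSucc, Fin.snoc_castSucc, (Fin.castSucc_lt_last _).not_ge, if_false, add_zero]

lemma completionTime_extendLast_last :
    completionTime (Fin.snoc p P : Fin (n + 1) → ℕ) (extendLast τ) (Fin.last n) = ∑ J, p J + P := by
  have h := completionTime_apply_last (Fin.snoc p P : Fin (n + 1) → ℕ) (extendLast τ)
  rw [extendLast_last] at h
  simp [h, Fin.sum_univ_castSucc]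

lemma maxTardiness_extendLast :
    maxTardiness (Fin.snoc p P : Fin (n + 1) → ℕ) (Fin.snoc d D) (extendLast τ) =
      (∑ J, p J + P - D) ⊔ maxTardiness p d τ := by
  rw [maxTardiness, Fin.univ_castSuccEmb, sup_cons, sup_map]
  simp [Function.comp_def, completionTime_extendLast_castSucc, completionTime_extendLast_last,
    maxTardiness]

lemma numTardy_extendLast :
    numTardy (Fin.snoc p P : Fin (n + 1) → ℕ) (Fin.snoc d D) (extendLast τ) =
      numTardy p d τ + if D < ∑ J, p J + P then 1 else 0 := by
  simp only [numTardy, card_filter, Fin.sum_univ_castSucc, Fin.snoc_castSucc, Fin.snoc_last,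
    completionTime_extendLast_castSucc, completionTime_extendLast_last]

end ExtendLast

section Reduction

variable {n : ℕ} {p d : Fin n → ℕ}

lemma le_maxTardiness_snoc_of_apply_last_ne (hd : ∀ J, d J ≤ ∑ J, p J) (P D : ℕ)
    {σ : Perm (Fin (n + 1))} (h : σ (Fin.last n) ≠ Fin.last n) :
    P ≤ maxTardiness (Fin.snoc p P : Fin (n + 1) → ℕ) (Fin.snoc d D) σ := by
  obtain ⟨j, hj⟩ := Fin.exists_castSucc_eq.mpr h
  have hlast := completionTime_sub_le_maxTardiness (Fin.snoc p P : Fin (n + 1) → ℕ)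
    (Fin.snoc d D) σ (σ (Fin.last n))
  rw [completionTime_apply_last, Fin.sum_univ_castSucc, ← hj] at hlast
  simp only [Fin.snoc_castSucc, Fin.snoc_last] at hlast
  have := hd j
  omega

lemma maxTardiness_extendLast_of_sum_eq {ℓ P : ℕ} (hP : P = ∑ J, p J) (hℓ : ℓ ≤ 2 * P)
    (τ : Perm (Fin n)) :
    maxTardiness (Fin.snoc p P : Fin (n + 1) → ℕ) (Fin.snoc d (2 * P - ℓ)) (extendLast τ) =
      ℓ ⊔ maxTardiness p d τ := by
  rw [maxTardiness_extendLast, ← hP, show P + P - (2 * P - ℓ) = ℓ by omega]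

lemma numTardy_extendLast_of_sum_eq {ℓ P : ℕ} (hP : P = ∑ J, p J) (hℓ : ℓ ≤ 2 * P)
    (τ : Perm (Fin n)) :
    numTardy (Fin.snoc p P : Fin (n + 1) → ℕ) (Fin.snoc d (2 * P - ℓ)) (extendLast τ) =
      numTardy p d τ + if 0 < ℓ then 1 else 0 := by
  simp only [numTardy_extendLast, ← hP, show 2 * P - ℓ < P + P ↔ 0 < ℓ by omega]

end Reduction

/-- The reduction from `1|T_max ≤ ℓ, ΣU_j ≤ k|` to `1||Lex(T_max, ΣU_j)`:
adding a job `J*` with `p(J*) = P` and `d(J*) = 2P − ℓ` (where `P = Σ p`,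
`ℓ < P`, `d(J) ≤ P` for all `J`, and some schedule of `𝒥` has maximum tardiness
at most `ℓ`) yields an instance whose minimum maximum tardiness is exactly `ℓ`,
attained only with `J*` last, and which admits a schedule with maximum tardiness
`ℓ` and at most `k+1` tardy jobs iff `𝒥` admits a schedule with maximum
tardiness at most `ℓ` and at most `k` tardy jobs. -/
theorem stmt8 (n : ℕ) (p d : Fin n → ℕ) (ℓ P : ℕ)
    (hP : P = ∑ J, p J) (hℓ : ℓ < P) (hd : ∀ J, d J ≤ P)
    (hex : ∃ σ : Equiv.Perm (Fin n),
      Finset.univ.sup (fun J => completionTime p σ J - d J) ≤ ℓ) :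
    let p' : Fin (n+1) → ℕ := Fin.snoc p P
    let d' : Fin (n+1) → ℕ := Fin.snoc d (2*P - ℓ)
    let tmax' := fun σ : Equiv.Perm (Fin (n+1)) =>
      Finset.univ.sup fun J => completionTime p' σ J - d' J
    let ntardy' := fun σ : Equiv.Perm (Fin (n+1)) =>
      (Finset.univ.filter fun J => d' J < completionTime p' σ J).card
    let ntardy := fun σ : Equiv.Perm (Fin n) =>
      (Finset.univ.filter fun J => d J < completionTime p σ J).card
    (∀ σ, ℓ ≤ tmax' σ) ∧
    (∃ σ, tmax' σ = ℓ) ∧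
    (∀ σ, tmax' σ = ℓ → σ (Fin.last n) = Fin.last n) ∧
    (∀ k : ℕ,
      (∃ σ, tmax' σ = ℓ ∧ ntardy' σ ≤ k + 1) ↔
      (∃ σ : Equiv.Perm (Fin n),
        Finset.univ.sup (fun J => completionTime p σ J - d J) ≤ ℓ ∧ ntardy σ ≤ k)) := by
  intro p' d' tmax' ntardy' ntardy
  have hext (τ) : tmax' (extendLast τ) = ℓ ⊔ maxTardiness p d τ :=
    maxTardiness_extendLast_of_sum_eq hP (by omega) τ
  have hext_tardy (τ) : ntardy' (extendLast τ) = ntardy τ + if 0 < ℓ then 1 else 0 :=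
    numTardy_extendLast_of_sum_eq hP (by omega) τ
  have hlt (σ) (h : σ (Fin.last n) ≠ Fin.last n) : ℓ < tmax' σ :=
    hℓ.trans_le (le_maxTardiness_snoc_of_apply_last_ne (hP ▸ hd) P _ h)
  have hfix (σ) (hσ : tmax' σ = ℓ) : σ (Fin.last n) = Fin.last n :=
    by_contra fun h => (hlt σ h).ne' hσ
  refine ⟨fun σ => ?_, ?_, hfix, fun k => ⟨?_, ?_⟩⟩
  · by_cases h : σ (Fin.last n) = Fin.last n
    · obtain ⟨τ, rfl⟩ := exists_extendLast_eq h
      exact (hext τ).ge.trans' le_sup_left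
    · exact (hlt σ h).le
  · obtain ⟨τ, hτ⟩ := hex
    exact ⟨extendLast τ, (hext τ).trans (sup_eq_left.mpr hτ)⟩
  · rintro ⟨σ, hσ, hk⟩
    obtain ⟨τ, rfl⟩ := exists_extendLast_eq (hfix σ hσ)
    rw [hext, sup_eq_left] at hσ
    refine ⟨τ, hσ, ?_⟩
    rw [hext_tardy] at hk
    rcases Nat.eq_zero_or_pos ℓ with rfl | hℓ₀
    · exact (numTardy_eq_zero_of_maxTardiness_eq_zero p d τ (Nat.le_zero.mp hσ)).trans_le k.zero_le
    · simpa [hℓ₀] using hk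
  · rintro ⟨τ, hτ, hk⟩
    refine ⟨extendLast τ, (hext τ).trans (sup_eq_left.mpr hτ), ?_⟩
    rw [hext_tardy]
    split_ifs <;> omega
end

section
/- Let 𝒥 be a set of n jobs with integer processing times and due dates, and let α > 0 be a real number. Form 𝒥' by multiplying every processing time and every due date by M := 2n·⌈α⌉. Then in 𝒥', every job's tardiness in any schedule is a multiple of M, and any schedule of 𝒥' minimizing T_max + α·ΣU_j (the a priori objective) also minimizes T_max; moreover a schedule of 𝒥' minimizes T_max + α·ΣU_j if and only if it minimizes T_max and, among all T_max-minimizing schedules, minimizes the number of tardy jobs. -/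
/-- Scaling every processing time and due date by `M = 2n·⌈α⌉` makes every
tardiness a multiple of `M`; then minimizing the a priori objective
`T_max + α·ΣU_j` is equivalent to lexicographically minimizing first `T_max`
and then the number of tardy jobs. -/
theorem stmt9 (n : ℕ) (p d : Fin n → ℕ) (α : ℝ) (hα : 0 < α) :
    let M : ℕ := 2 * n * (Int.ceil α).toNat
    let p' : Fin n → ℕ := fun J => M * p J
    let d' : Fin n → ℕ := fun J => M * d J
    let tmax := fun σ : Equiv.Perm (Fin n) =>
      Finset.univ.sup fun J => completionTime p' σ J - d' J
    let ntardy := fun σ : Equiv.Perm (Fin n) =>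
      (Finset.univ.filter fun J => d' J < completionTime p' σ J).card
    let obj := fun σ : Equiv.Perm (Fin n) => (tmax σ : ℝ) + α * (ntardy σ : ℝ)
    (∀ σ : Equiv.Perm (Fin n), ∀ J, M ∣ (completionTime p' σ J - d' J)) ∧
    (∀ σ : Equiv.Perm (Fin n), (∀ τ, obj σ ≤ obj τ) → ∀ τ, tmax σ ≤ tmax τ) ∧
    (∀ σ : Equiv.Perm (Fin n),
      (∀ τ, obj σ ≤ obj τ) ↔
        ((∀ τ, tmax σ ≤ tmax τ) ∧
          ∀ τ, (∀ ρ, tmax τ ≤ tmax ρ) → ntardy σ ≤ ntardy τ)) := by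
  intro M p' d' tmax ntardy obj
  have hdvdC : ∀ σ : Equiv.Perm (Fin n), ∀ J, M ∣ completionTime p' σ J := by
    intro σ J
    exact Finset.dvd_sum fun k _ => dvd_mul_right M (p (σ k))
  have part1 : ∀ σ : Equiv.Perm (Fin n), ∀ J, M ∣ (completionTime p' σ J - d' J) :=
    fun σ J => Nat.dvd_sub (hdvdC σ J) (dvd_mul_right M (d J))
  have hdvdT : ∀ σ, M ∣ tmax σ := by
    intro σ
    rcases (Finset.univ : Finset (Fin n)).eq_empty_or_nonempty with he | hne
    · simp only [tmax, he, Finset.sup_empty]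
      exact dvd_zero M
    · obtain ⟨b, hb, hbe⟩ :=
        Finset.exists_mem_eq_sup _ hne fun J => completionTime p' σ J - d' J
      simp only [tmax]
      rw [hbe]
      exact part1 σ b
  have key : ∀ σ τ : Equiv.Perm (Fin n), tmax σ < tmax τ → obj σ < obj τ := by
    intro σ τ h
    have hn : n ≠ 0 := by rintro rfl; simp [tmax] at h
    have hcZ : (0:ℤ) < ⌈α⌉ := Int.ceil_pos.mpr hα
    have hc : 1 ≤ (⌈α⌉).toNat := by omega
    have hnpos : 0 < n := Nat.pos_of_ne_zero hn
    obtain ⟨a, ha⟩ := hdvdT σ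
    obtain ⟨b, hb⟩ := hdvdT τ
    have hMpos : 0 < M := by
      have : 0 < 2 * n := by omega
      exact Nat.mul_pos this hc
    have hab : a < b := by
      rw [ha, hb] at h
      exact lt_of_mul_lt_mul_left h (Nat.zero_le M)
    have hstep : tmax σ + M ≤ tmax τ := by
      rw [ha, hb]
      calc M * a + M = M * (a + 1) := by ring
        _ ≤ M * b := Nat.mul_le_mul_left M hab
    have hNσ : (ntardy σ : ℝ) ≤ (n : ℝ) := by
      have : ntardy σ ≤ n := (Finset.card_filter_le _ _).trans (by simp)
      exact_mod_cast this
    have hαc : α ≤ ((⌈α⌉).toNat : ℝ) := by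
      calc α ≤ ((⌈α⌉ : ℤ) : ℝ) := Int.le_ceil α
        _ ≤ (((⌈α⌉).toNat : ℤ) : ℝ) := by exact_mod_cast Int.self_le_toNat _
        _ = ((⌈α⌉).toNat : ℝ) := by push_cast; ring
    have hn1 : (1:ℝ) ≤ (n : ℝ) := by exact_mod_cast hnpos
    have hc1 : (1:ℝ) ≤ ((⌈α⌉).toNat : ℝ) := by exact_mod_cast hc
    have hM : (M : ℝ) = 2 * (n : ℝ) * ((⌈α⌉).toNat : ℝ) := by
      simp only [M]; push_cast; ring
    have hbound : α * (ntardy σ : ℝ) < (M : ℝ) := by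
      rw [hM]
      nlinarith [hα.le, (Nat.cast_nonneg (ntardy σ) : (0:ℝ) ≤ (ntardy σ : ℝ))]
    have h2 : (tmax σ : ℝ) + (M : ℝ) ≤ (tmax τ : ℝ) := by exact_mod_cast hstep
    have h3 : (0:ℝ) ≤ α * (ntardy τ : ℝ) := by positivity
    simp only [obj]
    linarith
  have part2 : ∀ σ : Equiv.Perm (Fin n), (∀ τ, obj σ ≤ obj τ) → ∀ τ, tmax σ ≤ tmax τ := by
    intro σ hσ τ
    by_contra hlt
    push_neg at hlt
    exact absurd (hσ τ) (not_le.mpr (key τ σ hlt))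
  refine ⟨part1, part2, ?_⟩
  intro σ
  constructor
  · intro hσ
    refine ⟨part2 σ hσ, ?_⟩
    intro τ hτ
    have he : tmax σ = tmax τ := le_antisymm (part2 σ hσ τ) (hτ σ)
    have hobj := hσ τ
    simp only [obj] at hobj
    rw [he] at hobj
    have hle : (ntardy σ : ℝ) ≤ (ntardy τ : ℝ) :=
      le_of_mul_le_mul_left (by linarith) hα
    exact_mod_cast hle
  · rintro ⟨h1, h2⟩ τ
    rcases lt_or_eq_of_le (h1 τ) with hlt | heq
    · exact (key σ τ hlt).le
    · have hτmin : ∀ ρ, tmax τ ≤ tmax ρ := fun ρ => heq ▸ h1 ρ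
      have hN : ntardy σ ≤ ntardy τ := h2 τ hτmin
      have hNr : (ntardy σ : ℝ) ≤ (ntardy τ : ℝ) := by exact_mod_cast hN
      simp only [obj]
      rw [heq]
      have := mul_le_mul_of_nonneg_left hNr hα.le
      linarith
end

section
/- Let 𝒥̃ be a candidate set in the strong NP-hardness construction. In the canonical schedule for 𝒥̃, the delimiter job D*_j is early if and only if Σ_{i : J*_{i,j}∈𝒥̃} a_i ≥ j·t, and the delimiter job D_j is early if and only if Σ_{i : J_{i,j}∈𝒥̃} a_i ≤ j·t. Concretely, the completion time of D*_j equals d(D*_j) + Σ_{i : ¬J*_{i,j}∈𝒥̃} a_i − (m−j)t and the completion time of D_j equals d(D_j) + (Σ_{i : J_{i,j}∈𝒥̃} a_i − j·t)·α. -/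
/-- Lemma (delimiter jobs): in the canonical schedule for a candidate set
(with `Astar = {i : J*_{i,j} ∈ 𝒥̃}` and `A = {i : J_{i,j} ∈ 𝒥̃}`), the
completion time of `D*_j` equals
`d(D*_j) + Σ_{i∉Astar} a_i − (m−j)t`, the completion time of `D_j` equals
`d(D_j) + (Σ_{i∈A} a_i − jt)·α`, and hence `D*_j` is early iff
`Σ_{i∈Astar} a_i ≥ j·t` while `D_j` is early iff `Σ_{i∈A} a_i ≤ j·t`. -/
theorem stmt11 (n m t j : ℕ) (hj1 : 1 ≤ j) (hjm : j ≤ m)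
    (α : ℚ) (hα : 0 < α) (hmtα : ((m:ℚ)*(t:ℚ)) < α)
    (a : Fin n → ℕ) (hsum : ∑ i, a i = m * t)
    (Astar A : Finset (Fin n)) :
    let δ : ℚ := 4*(n:ℚ)*α^3 + 2*α^2 + (2*(m:ℚ)+1)*(t:ℚ)*α + (m:ℚ)*(t:ℚ)
    let Δstarj : ℚ := ((j:ℚ)-1)*δ
      + (2*(n:ℚ)*α^3 + α^2 + (2*(m:ℚ)-2*(j:ℚ)+1)*(t:ℚ)*α + ((m:ℚ)-(j:ℚ))*(t:ℚ))
    let Δj : ℚ := (j:ℚ)*δ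
    -- completion time of D*_j: p(𝒥_{≤j−1}) + first-half number jobs + p(D*_j)
    let CDstar : ℚ :=
      (Δstarj - ((n:ℚ)*α^3 + α^2 + ((m:ℚ)-(j:ℚ))*(t:ℚ)*α + ((m:ℚ)-(j:ℚ))*(t:ℚ)))
        + (n:ℚ)*α^3 + (∑ i ∈ Finset.univ \ Astar, (a i : ℚ))
        + α^2 + ((m:ℚ)-(j:ℚ))*(t:ℚ)*α
    -- completion time of D_j: p(𝒥*_{≤j}) + second-half number jobs + p(D_j)
    let CD : ℚ :=
      (Δj - ((n:ℚ)*α^3 + α^2 + 2*(j:ℚ)*(t:ℚ)*α))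
        + (n:ℚ)*α^3 + (∑ i ∈ A, (a i : ℚ))*α + α^2 + (j:ℚ)*(t:ℚ)*α
    (CDstar = Δstarj + (∑ i ∈ Finset.univ \ Astar, (a i : ℚ)) - ((m:ℚ)-(j:ℚ))*(t:ℚ)) ∧
    (CD = Δj + ((∑ i ∈ A, (a i : ℚ)) - (j:ℚ)*(t:ℚ))*α) ∧
    (CDstar ≤ Δstarj ↔ (j:ℚ)*(t:ℚ) ≤ ∑ i ∈ Astar, (a i : ℚ)) ∧
    (CD ≤ Δj ↔ (∑ i ∈ A, (a i : ℚ)) ≤ (j:ℚ)*(t:ℚ)) := by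

  intro δ Δstarj Δj CDstar CD
  have hcompl : (∑ i ∈ Finset.univ \ Astar, (a i : ℚ))
      = (m:ℚ)*(t:ℚ) - ∑ i ∈ Astar, (a i : ℚ) := by
    have h1 : (∑ i ∈ Finset.univ \ Astar, (a i : ℚ)) + ∑ i ∈ Astar, (a i : ℚ)
        = ∑ i, (a i : ℚ) := Finset.sum_sdiff (Finset.subset_univ Astar)
    have h2 : (∑ i, (a i : ℚ)) = (m:ℚ)*(t:ℚ) := by
      rw [← Nat.cast_sum]
      rw [hsum]
      push_cast
      ring
    linarith
  refine ⟨by simp only [CDstar, Δstarj]; ring, by simp only [CD, Δj]; ring, ?_, ?_⟩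
  · constructor
    · intro h
      have : CDstar = Δstarj + (∑ i ∈ Finset.univ \ Astar, (a i : ℚ)) - ((m:ℚ)-(j:ℚ))*(t:ℚ) := by
        simp only [CDstar, Δstarj]; ring
      rw [this, hcompl] at h
      nlinarith
    · intro h
      have : CDstar = Δstarj + (∑ i ∈ Finset.univ \ Astar, (a i : ℚ)) - ((m:ℚ)-(j:ℚ))*(t:ℚ) := by
        simp only [CDstar, Δstarj]; ring
      rw [this, hcompl]
      nlinarith
  · have hCD : CD = Δj + ((∑ i ∈ A, (a i : ℚ)) - (j:ℚ)*(t:ℚ))*α := by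
      simp only [CD, Δj]; ring
    rw [hCD]
    constructor
    · intro h; nlinarith
    · intro h; nlinarith
end

section
/- In any feasible canonical schedule of the strong NP-hardness construction, at most 2n jobs from {F_i^1, J*_{i,1}, ¬J*_{i,1} : i∈[n]} complete by time Δ*_1; for each j ≥ 2 at most n jobs from J*_j = {J*_{i,j}, ¬J*_{i,j} : i∈[n]} complete by time Δ*_j; and for each j ∈ [m] at most n jobs from J_j = {J_{i,j}, ¬J_{i,j} : i∈[n]} complete by time Δ_j. -/
/-- The completion time of job `J` in the schedule `σ` (rational processing times). -/
def completionTimeQ {N : ℕ} (p : Fin N → ℚ) (σ : Equiv.Perm (Fin N)) (J : Fin N) : ℚ :=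
  ∑ k ∈ Finset.univ.filter (fun k' => k' ≤ σ.symm J), p (σ k)

lemma sum_le_of_complete {N : ℕ} (p : Fin N → ℚ) (hp : ∀ J, 0 ≤ p J)
    (σ : Equiv.Perm (Fin N)) (S : Finset (Fin N)) (T : ℚ) (hS : S.Nonempty)
    (h : ∀ J ∈ S, completionTimeQ p σ J ≤ T) : ∑ J ∈ S, p J ≤ T := by
  obtain ⟨J₀, hJ₀, hmax⟩ := S.exists_max_image (fun J => σ.symm J) hS
  have h1 : ∑ J ∈ S, p J = ∑ k ∈ S.image σ.symm, p (σ k) := by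
    rw [Finset.sum_image (fun a _ b _ h => σ.symm.injective h)]
    simp
  have h2 : S.image σ.symm ⊆ Finset.univ.filter (fun k' => k' ≤ σ.symm J₀) := by
    intro k hk
    obtain ⟨J, hJ, rfl⟩ := Finset.mem_image.mp hk
    simp [hmax J hJ]
  calc ∑ J ∈ S, p J ≤ completionTimeQ p σ J₀ := by
        rw [h1]; exact Finset.sum_le_sum_of_subset_of_nonneg h2 (fun i _ _ => hp _)
    _ ≤ T := h J₀ hJ₀

lemma count_le {N : ℕ} (p : Fin N → ℚ) (hp : ∀ J, 0 ≤ p J) (α : ℚ) (hα : 0 < α)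
    (σ : Equiv.Perm (Fin N)) (S D : Finset (Fin N)) (T : ℚ) (c : ℕ)
    (hdisj : Disjoint D S)
    (hpS : ∀ J ∈ S, α^3 ≤ p J)
    (hcS : ∀ J ∈ S, completionTimeQ p σ J ≤ T)
    (hcD : ∀ J ∈ D, completionTimeQ p σ J ≤ T)
    (hbud : T - ∑ J ∈ D, p J < ((c:ℚ)+1) * α^3) : S.card ≤ c := by
  rcases S.eq_empty_or_nonempty with rfl | hS
  · simp
  have hsum : ∑ J ∈ S ∪ D, p J ≤ T := by
    apply sum_le_of_complete p hp σ _ _ (hS.mono Finset.subset_union_left)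
    intro J hJ
    rcases Finset.mem_union.mp hJ with h | h
    · exact hcS J h
    · exact hcD J h
  rw [Finset.sum_union (hdisj.symm)] at hsum
  have hlow : (S.card : ℚ) * α^3 ≤ ∑ J ∈ S, p J := by
    calc (S.card : ℚ) * α^3 = ∑ _J ∈ S, α^3 := by rw [Finset.sum_const, nsmul_eq_mul]
      _ ≤ ∑ J ∈ S, p J := Finset.sum_le_sum hpS
  have hα3 : 0 < α^3 := by positivity
  have : (S.card : ℚ) * α^3 < ((c:ℚ)+1) * α^3 := by linarith
  have hc : (S.card : ℚ) < (c:ℚ) + 1 := by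
    exact lt_of_mul_lt_mul_right this hα3.le
  exact_mod_cast Nat.lt_add_one_iff.mp (by exact_mod_cast hc)

/-- Lemma (counting): in any feasible schedule (every job has tardiness at most `ℓ`),
at most `2n` jobs of the family `{F_i^1, J*_{i,1}, ¬J*_{i,1}}` complete by `Δ*_1`;
for `j ≥ 2` at most `n` jobs of `𝒥*_j` complete by `Δ*_j`; and for `j ∈ [m]` at most
`n` jobs of `𝒥_j` complete by `Δ_j`.  The families consist of jobs with processing
time at least `α³`; the auxiliary sets `Dlow j = 𝒥_{≤j−1} \ {D_{j−1}}` and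
`Dstarlow j = 𝒥*_{≤j} \ {D*_j}` have due dates forcing them (by feasibility) to
complete before `Δ*_j`, resp. `Δ_j`, and the budget identities from the prior
observations are supplied as hypotheses. -/
theorem stmt12 (N n m : ℕ) (t α ℓ : ℚ) (hα : 0 < α)
    (p d : Fin N → ℚ) (hp : ∀ J, 0 ≤ p J)
    (Δ Δstar : ℕ → ℚ)
    (Ffam : Finset (Fin N))
    (Jstar Jset : ℕ → Finset (Fin N))
    (Dlow Dstarlow : ℕ → Finset (Fin N))
    (hF : ∀ J ∈ Ffam, α^3 ≤ p J)
    (hJstar : ∀ j, ∀ J ∈ Jstar j, α^3 ≤ p J)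
    (hJ : ∀ j, ∀ J ∈ Jset j, α^3 ≤ p J)
    (hΔ1 : Δstar 1 < (2*(n:ℚ)+1) * α^3)
    (hdisj1 : ∀ j, Disjoint (Dlow j) (Jstar j))
    (hdisj2 : ∀ j, Disjoint (Dstarlow j) (Jset j))
    (hddl1 : ∀ j, 2 ≤ j → j ≤ m → ∀ J ∈ Dlow j, d J + ℓ < Δstar j)
    (hddl2 : ∀ j, 1 ≤ j → j ≤ m → ∀ J ∈ Dstarlow j, d J + ℓ < Δ j)
    (hbudget1 : ∀ j, 2 ≤ j → j ≤ m →
      Δstar j - ∑ J ∈ Dlow j, p J < ((n:ℚ)+1) * α^3)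
    (hbudget2 : ∀ j, 1 ≤ j → j ≤ m →
      Δ j - ∑ J ∈ Dstarlow j, p J < ((n:ℚ)+1) * α^3)
    (σ : Equiv.Perm (Fin N))
    (hfeas : ∀ J, completionTimeQ p σ J ≤ d J + ℓ) :
    (Ffam.filter (fun J => completionTimeQ p σ J ≤ Δstar 1)).card ≤ 2 * n ∧
    (∀ j, 2 ≤ j → j ≤ m →
      ((Jstar j).filter (fun J => completionTimeQ p σ J ≤ Δstar j)).card ≤ n) ∧
    (∀ j, 1 ≤ j → j ≤ m →
      ((Jset j).filter (fun J => completionTimeQ p σ J ≤ Δ j)).card ≤ n) := by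
  refine ⟨?_, ?_, ?_⟩
  · apply count_le p hp α hα σ _ ∅ (Δstar 1) (2*n) (Finset.disjoint_left.mpr (by simp))
    · exact fun J hJ => hF J (Finset.mem_filter.mp hJ).1
    · exact fun J hJ => (Finset.mem_filter.mp hJ).2
    · simp
    · simp only [Finset.sum_empty]; push_cast; linarith
  · intro j h2 hm
    apply count_le p hp α hα σ _ (Dlow j) (Δstar j) n
      (((hdisj1 j).mono_right (Finset.filter_subset _ _)))
    · exact fun J hJ => hJstar j J (Finset.mem_filter.mp hJ).1
    · exact fun J hJ => (Finset.mem_filter.mp hJ).2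
    · exact fun J hJ => le_of_lt (lt_of_le_of_lt (hfeas J) (hddl1 j h2 hm J hJ))
    · exact hbudget1 j h2 hm
  · intro j h1 hm
    apply count_le p hp α hα σ _ (Dstarlow j) (Δ j) n
      (((hdisj2 j).mono_right (Finset.filter_subset _ _)))
    · exact fun K hK => hJ j K (Finset.mem_filter.mp hK).1
    · exact fun J hJ => (Finset.mem_filter.mp hJ).2
    · exact fun J hJ => le_of_lt (lt_of_le_of_lt (hfeas J) (hddl2 j h1 hm J hJ))
    · exact hbudget2 j h1 hm
end

section
/- In the weak NP-hardness construction for 1||Lex(ΣU_j, T_max): any set 𝒥* of n·(2W/X) + i early jobs all completing by time D*_1 has total processing time at least n·W + Σ_{i₀=1}^{i} i₀·X; and if its total processing time is less than n·W + Σ_{i₀=1}^{i} i₀·X + 0.5·X, then 𝒥* contains exactly one of J*_{i₀} and ¬J*_{i₀} for each i₀ ∈ [i] together with all n·(2W/X) filler jobs. -/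
/-!
Measure processing times in units of `X/2` and group the jobs `J*_k`, `¬J*_k` ("star jobs")
and the fillers `F_k` by their level `k`: a filler weighs `1` and a star job of level `k` at
least `2k`. `𝒥*` contains no `J_k` or `¬J_k`: its length `W` plus the at least `n·fc` other
jobs, each of length at least `X/2`, would exceed `D*_1`. Every other job of level `≤ m` is
due by `m·W + Σ_{k ≤ m} k·X + t`, and `2t < X`, so the jobs of level `≤ m` weigh at most
`m·fc + m(m+1)`: the weight of all fillers plus one star job per level. As the weights grow
with the level, Abel summation turns these prefix bounds into "at most `m·(fc+1)` jobs of
level `≤ m`". With `n·fc + i` jobs in all, the total weight is then at least `n·fc + i(i+1)`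
plus the number of missing fillers, and equality forces all fillers and exactly one star job
at each of the levels `1, …, i`.
-/

/-- The jobs of the weak NP-hardness construction: for each `i ∈ [n]` (represented
by `i : Fin n`, encoding index `i.val + 1`) a job `J*_i`, its counterpart `¬J*_i`,
`fc = 2W/X` filler jobs `F_i`, and the long jobs `J_i` and `¬J_i`. -/
inductive WJob (n fc : ℕ) where
  | star (i : Fin n)
  | nstar (i : Fin n)
  | filler (i : Fin n) (c : Fin fc)
  | big (i : Fin n)
  | nbig (i : Fin n)
  deriving DecidableEq, Fintype

/-- The completion time of job `J` in a schedule `σ` (a bijection from jobs to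
positions): the sum of the processing times of all jobs at positions up to and
including the position of `J`. -/
def wCompletion {n fc : ℕ} (p : WJob n fc → ℕ)
    (σ : WJob n fc ≃ Fin (Fintype.card (WJob n fc))) (J : WJob n fc) : ℕ :=
  ∑ J' ∈ Finset.univ.filter (fun J' => σ J' ≤ σ J), p J'

open Finset

theorem le_of_mul_le_mul_add_lt {a b r X : ℕ} (h : a * X ≤ b * X + r) (hr : r < X) : a ≤ b :=
  Nat.lt_succ_iff.mp (Nat.lt_of_mul_lt_mul_right (a := X) (by rw [Nat.succ_mul]; omega))

theorem sum_Icc_mul_two (m : ℕ) : (∑ k ∈ Icc 1 m, k) * 2 = m * (m + 1) := by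
  induction m with
  | zero => rfl
  | succ m ih => rw [sum_Icc_succ_top (by omega), add_mul, ih]; ring

theorem two_mul_add_card_mul_le {α : Type*} [DecidableEq α] {A : Finset α} {q : α → ℕ} {X : ℕ}
    (hX : ∀ a ∈ A, X ≤ 2 * q a) {a : α} (ha : a ∈ A) :
    2 * q a + (#A - 1) * X ≤ 2 * ∑ b ∈ A, q b := by
  rw [← add_sum_erase A q ha, mul_add, mul_sum, ← card_erase_of_mem ha, ← smul_eq_mul]
  exact Nat.add_le_add_left (card_nsmul_le_sum _ _ _ fun b hb => hX b (mem_of_mem_erase hb)) _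

section LevelCounting

-- `s ℓ` and `f ℓ` stand for the numbers of star jobs and of fillers of level `ℓ`.
variable {s f : ℕ → ℕ} {n fc i : ℕ}

theorem sum_range_succ_mul_add_sum_range_sum (a : ℕ → ℕ) (m : ℕ) :
    ∑ ℓ ∈ range m, (ℓ + 1) * a ℓ + ∑ j ∈ range m, ∑ ℓ ∈ range j, a ℓ =
      m * ∑ ℓ ∈ range m, a ℓ := by
  induction m with
  | zero => simp
  | succ m ih =>
    simp only [sum_range_succ]
    linear_combination ih

theorem sum_range_two_mul_add_one (m : ℕ) : ∑ ℓ ∈ range m, (2 * ℓ + 1) = m * m := by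
  induction m with
  | zero => simp
  | succ m ih => rw [sum_range_succ, ih]; ring

theorem sum_range_sub_mul_two (hin : i ≤ n) : (∑ j ∈ range n, (i - j)) * 2 = i * (i + 1) := by
  induction i generalizing n with
  | zero => simp
  | succ i ih =>
    obtain ⟨n, rfl⟩ : ∃ n', n = n' + 1 := ⟨n - 1, by omega⟩
    simp only [sum_range_succ', Nat.add_sub_add_right, Nat.sub_zero, add_mul, ih (by omega : i ≤ n)]
    ring

theorem sum_range_add_mul_le (hf : ∀ ℓ < n, f ℓ ≤ fc) {j : ℕ} (hj : j ≤ n) :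
    ∑ ℓ ∈ range n, f ℓ + j * fc ≤ ∑ ℓ ∈ range j, f ℓ + n * fc := by
  rw [← sum_range_add_sum_Ico _ hj]
  have := sum_le_card_nsmul (Ico j n) (fun ℓ => f ℓ) fc fun ℓ hℓ => hf ℓ (mem_Ico.mp hℓ).2
  rw [Nat.card_Ico, smul_eq_mul] at this
  have : (n - j) * fc + j * fc = n * fc := by rw [← add_mul, Nat.sub_add_cancel hj]
  omega

-- Abel summation, with the increasing weights `ℓ + 1`.
theorem sum_range_le_of_weighted_sum_le {a : ℕ → ℕ} {K : ℕ}
    (h : ∀ m ≤ n, 2 * ∑ ℓ ∈ range m, (ℓ + 1) * a ℓ ≤ K * (m * (m + 1))) :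
    ∀ m ≤ n, ∑ ℓ ∈ range m, a ℓ ≤ K * m := by
  intro m
  induction m using Nat.strong_induction_on with
  | _ m ih =>
    intro hmn
    rcases m with _ | k
    · simp
    have hprev : ∑ j ∈ range (k + 1), ∑ ℓ ∈ range j, a ℓ ≤ K * ∑ j ∈ range (k + 1), j := by
      rw [mul_sum]
      exact sum_le_sum fun j hj => ih j (mem_range.mp hj) (by have := mem_range.mp hj; omega)
    have hgauss := sum_range_id_mul_two (k + 1)
    have habel := sum_range_succ_mul_add_sum_range_sum a (k + 1)
    have hk := h (k + 1) hmn
    simp only [Nat.add_sub_cancel] at hgauss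
    have : (k + 1) * ∑ ℓ ∈ range (k + 1), a ℓ ≤ (k + 1) * (K * (k + 1)) := by nlinarith
    exact Nat.le_of_mul_le_mul_left this k.succ_pos

theorem sum_range_add_le_of_cost_le (hf : ∀ ℓ < n, f ℓ ≤ fc)
    (hcost : ∀ m ≤ n, ∑ ℓ ∈ range m, (f ℓ + 2 * (ℓ + 1) * s ℓ) ≤ m * fc + m * (m + 1)) :
    ∀ m ≤ n, ∑ ℓ ∈ range m, (s ℓ + f ℓ) ≤ (fc + 1) * m := by
  refine sum_range_le_of_weighted_sum_le fun m hm => ?_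
  have hterm : ∀ ℓ ∈ range m,
      2 * ((ℓ + 1) * (s ℓ + f ℓ)) ≤ (f ℓ + 2 * (ℓ + 1) * s ℓ) + fc * (2 * ℓ + 1) := by
    intro ℓ hℓ
    have := hf ℓ (by have := mem_range.mp hℓ; omega)
    nlinarith
  calc 2 * ∑ ℓ ∈ range m, (ℓ + 1) * (s ℓ + f ℓ)
      ≤ ∑ ℓ ∈ range m, ((f ℓ + 2 * (ℓ + 1) * s ℓ) + fc * (2 * ℓ + 1)) := by
        rw [mul_sum]; exact sum_le_sum hterm
    _ ≤ (m * fc + m * (m + 1)) + fc * (m * m) := by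
        rw [sum_add_distrib, ← mul_sum, sum_range_two_mul_add_one]
        exact Nat.add_le_add_right (hcost m hm) _
    _ = (fc + 1) * (m * (m + 1)) := by ring

theorem sum_range_add_sub_le (hf : ∀ ℓ < n, f ℓ ≤ fc)
    (hcost : ∀ m ≤ n, ∑ ℓ ∈ range m, (f ℓ + 2 * (ℓ + 1) * s ℓ) ≤ m * fc + m * (m + 1))
    (hcount : ∑ ℓ ∈ range n, (s ℓ + f ℓ) = n * fc + i) :
    ∀ j ≤ n, ∑ ℓ ∈ range j, s ℓ + (i - j) ≤ ∑ ℓ ∈ range n, s ℓ := by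
  intro j hj
  have hcount' := sum_range_add_le_of_cost_le hf hcost j hj
  have htail := sum_range_add_mul_le hf hj
  have hmono := sum_le_sum_of_subset (f := s) (range_subset_range.mpr hj)
  rw [sum_add_distrib] at hcount hcount'
  have : (fc + 1) * j = j * fc + j := by ring
  omega

theorem two_mul_sum_range_succ_mul_eq (hin : i ≤ n)
    (hpre : ∀ j ≤ n, ∑ ℓ ∈ range j, s ℓ + (i - j) ≤ ∑ ℓ ∈ range n, s ℓ) :
    2 * ∑ ℓ ∈ range n, (ℓ + 1) * s ℓ = i * (i + 1) +
      2 * ∑ j ∈ range n, (∑ ℓ ∈ range n, s ℓ - (∑ ℓ ∈ range j, s ℓ + (i - j))) := by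
  have habel := sum_range_succ_mul_add_sum_range_sum s n
  have hslack : ∑ j ∈ range n, ∑ ℓ ∈ range j, s ℓ + ∑ j ∈ range n, (i - j) +
      ∑ j ∈ range n, (∑ ℓ ∈ range n, s ℓ - (∑ ℓ ∈ range j, s ℓ + (i - j))) =
        n * ∑ ℓ ∈ range n, s ℓ := by
    rw [← sum_add_distrib, ← sum_add_distrib, sum_congr rfl fun j hj =>
      Nat.add_sub_of_le (hpre j (mem_range.mp hj).le), sum_const, card_range, smul_eq_mul]
  have := sum_range_sub_mul_two hin
  omega

theorem le_sum_cost_and_extremal (hin : i ≤ n) (hf : ∀ ℓ < n, f ℓ ≤ fc)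
    (hcost : ∀ m ≤ n, ∑ ℓ ∈ range m, (f ℓ + 2 * (ℓ + 1) * s ℓ) ≤ m * fc + m * (m + 1))
    (hcount : ∑ ℓ ∈ range n, (s ℓ + f ℓ) = n * fc + i) :
    n * fc + i * (i + 1) ≤ ∑ ℓ ∈ range n, (f ℓ + 2 * (ℓ + 1) * s ℓ) ∧
      (∑ ℓ ∈ range n, (f ℓ + 2 * (ℓ + 1) * s ℓ) ≤ n * fc + i * (i + 1) →
        (∀ ℓ < n, f ℓ = fc) ∧ ∀ ℓ < i, s ℓ = 1) := by
  have hpre := sum_range_add_sub_le hf hcost hcount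
  have hweighted := two_mul_sum_range_succ_mul_eq hin hpre
  simp only [sum_add_distrib, mul_assoc, ← mul_sum] at hcount ⊢
  obtain ⟨c, hc⟩ : ∃ c : ℕ → ℕ, ∀ j, ∑ ℓ ∈ range j, s ℓ = c j := ⟨_, fun _ => rfl⟩
  simp only [hc] at hpre hweighted hcount
  -- the `j = 0` summand is the number of missing fillers
  have hslack0 : c n - i ≤ ∑ j ∈ range n, (c n - (c j + (i - j))) := by
    have hc0 : c 0 = 0 := by rw [← hc, sum_range_zero]
    rcases Nat.eq_zero_or_pos n with rfl | hn
    · simp [hc0]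
    · simpa [hc0] using single_le_sum (f := fun j => c n - (c j + (i - j)))
        (fun j _ => Nat.zero_le _) (mem_range.mpr hn)
  refine ⟨by omega, fun hle => ⟨fun ℓ hℓ => ?_, fun ℓ hℓ => ?_⟩⟩
  · refine (sum_eq_sum_iff_of_le fun k hk => hf k (mem_range.mp hk)).mp ?_ ℓ (mem_range.mpr hℓ)
    rw [sum_const, card_range, smul_eq_mul]
    omega
  · have hzero := sum_eq_zero_iff.mp (by omega : ∑ j ∈ range n, (c n - (c j + (i - j))) = 0)
    have hcj : ∀ j ≤ i, c j = j := by
      intro j hj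
      rcases lt_or_eq_of_le (hj.trans hin) with hjn | rfl
      · have := hzero j (mem_range.mpr hjn)
        have := hpre j hjn.le
        omega
      · omega
    have := hc (ℓ + 1)
    rw [sum_range_succ, hc, hcj ℓ hℓ.le, hcj (ℓ + 1) hℓ] at this
    omega

end LevelCounting

namespace WJob

variable {n fc : ℕ}

-- 0-based: `J*_k`, `¬J*_k`, `F_k`, `J_k` and `¬J_k` have level `k - 1`.
def level : WJob n fc → ℕ
  | star i | nstar i | filler i _ | big i | nbig i => i

def isStar : WJob n fc → Bool
  | star _ | nstar _ => true
  | filler _ _ | big _ | nbig _ => false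

def isFiller : WJob n fc → Bool
  | filler _ _ => true
  | star _ | nstar _ | big _ | nbig _ => false

end WJob

open WJob

section Counts

variable {n fc : ℕ}

def starCount (𝒥 : Finset (WJob n fc)) (ℓ : ℕ) : ℕ := #{J ∈ 𝒥 | J.isStar ∧ J.level = ℓ}

def fillerCount (𝒥 : Finset (WJob n fc)) (ℓ : ℕ) : ℕ := #{J ∈ 𝒥 | J.isFiller ∧ J.level = ℓ}

theorem fillerCount_val (𝒥 : Finset (WJob n fc)) (i : Fin n) :
    fillerCount 𝒥 i = #{c | filler i c ∈ 𝒥} := by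
  have hinj : (filler (fc := fc) i).Injective := fun c c' h => by cases h; rfl
  rw [fillerCount, ← card_image_of_injective _ hinj]
  congr 1
  ext J
  simp only [mem_filter, mem_image, mem_univ, true_and]
  cases J <;> simp [isFiller, level, Fin.val_inj]
  grind

theorem fillerCount_le (𝒥 : Finset (WJob n fc)) {ℓ : ℕ} (hℓ : ℓ < n) : fillerCount 𝒥 ℓ ≤ fc :=
  (fillerCount_val 𝒥 ⟨ℓ, hℓ⟩).trans_le ((card_filter_le _ _).trans_eq (card_fin fc))

theorem filler_mem_of_fillerCount_eq (𝒥 : Finset (WJob n fc)) (i : Fin n)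
    (h : fillerCount 𝒥 i = fc) (c : Fin fc) : filler i c ∈ 𝒥 := by
  rw [fillerCount_val] at h
  exact (filter_card_eq (by simpa using h) c (mem_univ c) :)

theorem star_mem_iff_of_starCount_eq_one (𝒥 : Finset (WJob n fc)) (i : Fin n)
    (h : starCount 𝒥 i = 1) : star i ∈ 𝒥 ↔ nstar i ∉ 𝒥 := by
  have : {J ∈ 𝒥 | J.isStar ∧ J.level = (i : ℕ)} =
      {J ∈ ({star i, nstar i} : Finset (WJob n fc)) | J ∈ 𝒥} := by
    ext J
    simp only [mem_filter, mem_insert, mem_singleton]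
    cases J <;> simp [isStar, level] <;> aesop
  rw [starCount, this] at h
  by_cases h1 : star i ∈ 𝒥 <;> by_cases h2 : nstar i ∈ 𝒥 <;>
    simp_all [filter_insert, filter_singleton]

theorem disjoint_stars_fillers (𝒥 : Finset (WJob n fc)) (ℓ : ℕ) :
    Disjoint {J ∈ 𝒥 | J.isStar ∧ J.level = ℓ} {J ∈ 𝒥 | J.isFiller ∧ J.level = ℓ} :=
  disjoint_filter.mpr fun J _ h h' => by cases J <;> simp_all [isStar, isFiller]

theorem card_eq_sum_starCount_add_fillerCount {𝒥 : Finset (WJob n fc)}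
    (h𝒥 : ∀ J ∈ 𝒥, J.isStar ∨ J.isFiller) :
    #𝒥 = ∑ ℓ ∈ range n, (starCount 𝒥 ℓ + fillerCount 𝒥 ℓ) := by
  rw [card_eq_sum_card_fiberwise (f := level) (t := range n) fun J _ => by
    cases J <;> simp [level]]
  refine sum_congr rfl fun ℓ _ => ?_
  rw [starCount, fillerCount, ← card_union_of_disjoint (disjoint_stars_fillers 𝒥 ℓ)]
  congr 1
  ext J
  have := h𝒥 J
  simp only [mem_filter, mem_union]
  cases J <;> simp_all [isStar, isFiller]

theorem sum_range_counts_mul_le {p : WJob n fc → ℕ} {X : ℕ}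
    (hstar : ∀ J : WJob n fc, J.isStar → 2 * (J.level + 1) * X ≤ 2 * p J)
    (hfill : ∀ J : WJob n fc, J.isFiller → X ≤ 2 * p J) (𝒥 : Finset (WJob n fc)) (m : ℕ) :
    (∑ ℓ ∈ range m, (fillerCount 𝒥 ℓ + 2 * (ℓ + 1) * starCount 𝒥 ℓ)) * X ≤
      2 * ∑ J ∈ 𝒥 with J.level < m, p J := by
  simp only [← mem_range, ← sum_fiberwise_eq_sum_filter 𝒥 (range m) level, sum_mul, mul_sum]
  gcongr with ℓ
  calc (fillerCount 𝒥 ℓ + 2 * (ℓ + 1) * starCount 𝒥 ℓ) * X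
      = #{J ∈ 𝒥 | J.isFiller ∧ J.level = ℓ} • X +
          #{J ∈ 𝒥 | J.isStar ∧ J.level = ℓ} • (2 * (ℓ + 1) * X) := by
        simp only [fillerCount, starCount, smul_eq_mul]; ring
    _ ≤ ∑ J ∈ 𝒥 with J.isFiller ∧ J.level = ℓ, 2 * p J +
          ∑ J ∈ 𝒥 with J.isStar ∧ J.level = ℓ, 2 * p J := by
        gcongr
        · exact card_nsmul_le_sum _ _ _ fun J hJ => hfill J (mem_filter.mp hJ).2.1
        · exact card_nsmul_le_sum _ _ _ fun J hJ => by
            obtain ⟨-, hS, rfl⟩ := mem_filter.mp hJ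
            exact hstar J hS
    _ ≤ ∑ J ∈ 𝒥 with J.level = ℓ, 2 * p J := by
        rw [← sum_union (disjoint_stars_fillers 𝒥 ℓ).symm]
        exact sum_le_sum_of_subset fun J hJ => by
          simp only [mem_union, mem_filter] at hJ ⊢
          tauto

section Schedule

variable {p d : WJob n fc → ℕ} {σ : WJob n fc ≃ Fin (Fintype.card (WJob n fc))}
  {𝒥 : Finset (WJob n fc)} {X W t : ℕ}

theorem two_mul_level_succ_mul_le {a : Fin n → ℕ}
    (hpstar : ∀ i0, p (.star i0) = (i0.val + 1) * X)
    (hpnstar : ∀ i0, p (.nstar i0) = (i0.val + 1) * X + a i0) :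
    ∀ J : WJob n fc, J.isStar → 2 * (J.level + 1) * X ≤ 2 * p J := by
  rintro (j | j | ⟨j, c⟩ | j | j) h <;> simp [isStar, level, hpstar, hpnstar, mul_assoc] at h ⊢

theorem le_two_mul_of_isFiller (hpfill : ∀ i0 c, 2 * p (.filler i0 c) = X) :
    ∀ J : WJob n fc, J.isFiller → X ≤ 2 * p J := by
  rintro (j | j | ⟨j, c⟩ | j | j) h <;> simp [isFiller, hpfill] at h ⊢

theorem sum_le_of_forall_wCompletion_le {A : Finset (WJob n fc)} {D : ℕ}
    (h : ∀ J ∈ A, wCompletion p σ J ≤ D) : ∑ J ∈ A, p J ≤ D := by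
  rcases A.eq_empty_or_nonempty with rfl | hA
  · simp
  obtain ⟨J, hJ, hmax⟩ := A.exists_max_image σ hA
  refine le_trans (sum_le_sum_of_subset fun J' hJ' => ?_) (h J hJ)
  simpa using hmax J' hJ'

theorem le_of_isStar_eq_false_of_isFiller_eq_false {Y Z : ℕ} {a : Fin n → ℕ}
    (hpbig : ∀ i0, p (.big i0) = W + 2^(i0.val + 1) * Y + a i0 * Z)
    (hpnbig : ∀ i0, p (.nbig i0) = W + 2^(i0.val + 1) * Y) :
    ∀ J : WJob n fc, J.isStar = false → J.isFiller = false → W ≤ p J := by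
  rintro (j | j | ⟨j, c⟩ | j | j) h h' <;>
    simp [isStar, isFiller, hpbig, hpnbig, add_assoc] at h h' ⊢

theorem isStar_or_isFiller_of_two_mul_sum_lt
    (hstar : ∀ J : WJob n fc, J.isStar → 2 * (J.level + 1) * X ≤ 2 * p J)
    (hfill : ∀ J : WJob n fc, J.isFiller → X ≤ 2 * p J)
    (hbig : ∀ J : WJob n fc, J.isStar = false → J.isFiller = false → W ≤ p J) (hXW : X ≤ W)
    (hsum : 2 * ∑ J ∈ 𝒥, p J < 2 * W + (#𝒥 - 1) * X) : ∀ J ∈ 𝒥, J.isStar ∨ J.isFiller := by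
  have hX : ∀ J, X ≤ 2 * p J := fun J => by
    cases hS : J.isStar
    · cases hF : J.isFiller
      · have := hbig J hS hF; omega
      · exact hfill J hF
    · have := hstar J hS; nlinarith
  intro J hJ
  by_contra hJbig
  obtain ⟨hS, hF⟩ : J.isStar = false ∧ J.isFiller = false := by simpa using hJbig
  have := two_mul_add_card_mul_le (fun J _ => hX J) hJ
  have := hbig J hS hF
  omega

theorem sum_level_lt_le (hearly : ∀ J ∈ 𝒥, wCompletion p σ J ≤ d J)
    (h𝒥 : ∀ J ∈ 𝒥, J.isStar ∨ J.isFiller)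
    (hdstar : ∀ i0, d (.star i0) =
      (i0.val + 1) * W + (∑ i1 ∈ Finset.Icc 1 (i0.val + 1), i1 * X) + t)
    (hdnstar : ∀ i0, d (.nstar i0) =
      i0.val * W + (∑ i1 ∈ Finset.Icc 1 (i0.val + 1), i1 * X) + t)
    (hdfill : ∀ i0 c, d (.filler i0 c) =
      (i0.val + 1) * W + (∑ i1 ∈ Finset.Icc 1 (i0.val + 1), i1 * X) + t) (m : ℕ) :
    ∑ J ∈ 𝒥 with J.level < m, p J ≤ m * W + ∑ i1 ∈ Icc 1 m, i1 * X + t := by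
  refine sum_le_of_forall_wCompletion_le fun J hJ => (hearly J (mem_filter.mp hJ).1).trans ?_
  obtain ⟨hJ, hm⟩ := mem_filter.mp hJ
  have hmono : ∀ k ≤ m, k * W + ∑ i1 ∈ Icc 1 k, i1 * X ≤ m * W + ∑ i1 ∈ Icc 1 m, i1 * X :=
    fun k hk => by gcongr
  cases J with
  | star j => rw [hdstar]; simpa using hmono (j + 1) hm
  | nstar j => rw [hdnstar]; have := hmono (j + 1) hm; linarith
  | filler j c => rw [hdfill]; simpa using hmono (j + 1) hm
  | _ => simpa [isStar, isFiller] using h𝒥 _ hJ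

end Schedule

end Counts

theorem stmt13_general (n t fc i : ℕ) (hn : 0 < n) (hi1 : 1 ≤ i) (hin : i ≤ n)
    (a : Fin n → ℕ)
    (Z Y X W : ℕ)
    (hZ : Z = 2*t + 1) (hY : Y = (2*t + 1) * Z)
    (hX : X = n * 2^(n+2) * Y) (hW : W = 2 * n^2 * X)
    (hfc : fc * X = 2 * W)
    (p d : WJob n fc → ℕ)
    (hpstar : ∀ i0, p (.star i0) = (i0.val + 1) * X)
    (hpnstar : ∀ i0, p (.nstar i0) = (i0.val + 1) * X + a i0)
    (hpfill : ∀ i0 c, 2 * p (.filler i0 c) = X)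
    (hpbig : ∀ i0, p (.big i0) = W + 2^(i0.val + 1) * Y + a i0 * Z)
    (hpnbig : ∀ i0, p (.nbig i0) = W + 2^(i0.val + 1) * Y)
    (hdstar : ∀ i0, d (.star i0) =
      (i0.val + 1) * W + (∑ i1 ∈ Finset.Icc 1 (i0.val + 1), i1 * X) + t)
    (hdnstar : ∀ i0, d (.nstar i0) =
      i0.val * W + (∑ i1 ∈ Finset.Icc 1 (i0.val + 1), i1 * X) + t)
    (hdfill : ∀ i0 c, d (.filler i0 c) =
      (i0.val + 1) * W + (∑ i1 ∈ Finset.Icc 1 (i0.val + 1), i1 * X) + t)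
    (σ : WJob n fc ≃ Fin (Fintype.card (WJob n fc)))
    (𝒥 : Finset (WJob n fc))
    (hcard : 𝒥.card = n * fc + i)
    (hearly : ∀ J ∈ 𝒥, wCompletion p σ J ≤ d J)
    (hby : ∀ J ∈ 𝒥, wCompletion p σ J ≤ n * W + (∑ i1 ∈ Finset.Icc 1 n, i1 * X) + t) :
    (n * W + ∑ i1 ∈ Finset.Icc 1 i, i1 * X ≤ ∑ J ∈ 𝒥, p J) ∧
    (2 * (∑ J ∈ 𝒥, p J) < 2 * (n * W + ∑ i1 ∈ Finset.Icc 1 i, i1 * X) + X →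
      (∀ i0 : Fin n, i0.val + 1 ≤ i → ((WJob.star i0 ∈ 𝒥) ↔ (WJob.nstar i0 ∉ 𝒥))) ∧
      (∀ i0 c, WJob.filler i0 c ∈ 𝒥)) := by
  have hXt : 2 * t < X := by
    have : 1 ≤ n * 2 ^ (n + 2) := Nat.one_le_iff_ne_zero.mpr (by positivity)
    rw [hX, hY, hZ]; nlinarith
  have hnXW : (n * (n + 1) + 1) * X ≤ 2 * W := by
    rw [hW, ← mul_assoc]; exact Nat.mul_le_mul_right X (by nlinarith)
  have hXleW : X ≤ W := by rw [hW]; exact Nat.le_mul_of_pos_left X (by positivity)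
  have hdue : ∀ m k, 2 * (m * W + ∑ i1 ∈ Icc 1 k, i1 * X) = (m * fc + k * (k + 1)) * X := by
    intro m k; rw [← sum_mul, ← sum_Icc_mul_two]; linear_combination m * hfc.symm
  have hpS := two_mul_level_succ_mul_le hpstar hpnstar
  have hpF := le_two_mul_of_isFiller hpfill
  have hno := isStar_or_isFiller_of_two_mul_sum_lt hpS hpF
    (le_of_isStar_eq_false_of_isFiller_eq_false hpbig hpnbig) hXleW (by
      have := sum_le_of_forall_wCompletion_le hby
      have := hdue n n
      have : n * fc * X ≤ (#𝒥 - 1) * X := Nat.mul_le_mul_right X (by omega)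
      nlinarith)
  have hcost : ∀ m ≤ n, ∑ ℓ ∈ range m, (fillerCount 𝒥 ℓ + 2 * (ℓ + 1) * starCount 𝒥 ℓ) ≤
      m * fc + m * (m + 1) := fun m _ => le_of_mul_le_mul_add_lt
    ((sum_range_counts_mul_le hpS hpF 𝒥 m).trans
      (by have := sum_level_lt_le hearly hno hdstar hdnstar hdfill m; have := hdue m m; omega)) hXt
  obtain ⟨hlow, hextremal⟩ := le_sum_cost_and_extremal hin (fun ℓ hℓ => fillerCount_le 𝒥 hℓ) hcost
    (by rw [← card_eq_sum_starCount_add_fillerCount hno, hcard])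
  have htotal := sum_range_counts_mul_le hpS hpF 𝒥 n
  rw [filter_true_of_mem fun J _ => by cases J <;> simp [level]] at htotal
  have hni := hdue n i
  refine ⟨by nlinarith, fun hlt => ?_⟩
  obtain ⟨hf, hs⟩ :=
    hextremal (Nat.lt_succ_iff.mp (Nat.lt_of_mul_lt_mul_right (a := X) (by nlinarith)))
  exact ⟨fun i0 hi0 => star_mem_iff_of_starCount_eq_one 𝒥 i0 (hs i0 hi0),
    fun i0 => filler_mem_of_fillerCount_eq 𝒥 i0 (hf i0 i0.2)⟩

/-- Lemma 11 of the paper: any set `𝒥*` of `n·(2W/X) + i` early jobs all completing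
by time `D*_1 = n·W + Σ_{i₀=1}^n i₀·X + t` has total processing time at least
`n·W + Σ_{i₀=1}^i i₀·X`; and if the total processing time is less than
`n·W + Σ_{i₀=1}^i i₀·X + X/2` (stated doubled to avoid division), then `𝒥*`
contains exactly one of `J*_{i₀}` and `¬J*_{i₀}` for each `i₀ ∈ [i]`, together with
all filler jobs. -/
theorem stmt13 (n t fc i : ℕ) (ht : 0 < t) (hn : 0 < n) (hi1 : 1 ≤ i) (hin : i ≤ n)
    (a : Fin n → ℕ) (hapos : ∀ i0, 0 < a i0) (hasum : ∑ i0, a i0 = 2 * t)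
    (Z Y X W : ℕ)
    (hZ : Z = 2*t + 1) (hY : Y = (2*t + 1) * Z)
    (hX : X = n * 2^(n+2) * Y) (hW : W = 2 * n^2 * X)
    (hfc : fc * X = 2 * W)
    (p d : WJob n fc → ℕ)
    (hpstar : ∀ i0, p (.star i0) = (i0.val + 1) * X)
    (hpnstar : ∀ i0, p (.nstar i0) = (i0.val + 1) * X + a i0)
    (hpfill : ∀ i0 c, 2 * p (.filler i0 c) = X)
    (hpbig : ∀ i0, p (.big i0) = W + 2^(i0.val + 1) * Y + a i0 * Z)
    (hpnbig : ∀ i0, p (.nbig i0) = W + 2^(i0.val + 1) * Y)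
    (hdstar : ∀ i0, d (.star i0) =
      (i0.val + 1) * W + (∑ i1 ∈ Finset.Icc 1 (i0.val + 1), i1 * X) + t)
    (hdnstar : ∀ i0, d (.nstar i0) =
      i0.val * W + (∑ i1 ∈ Finset.Icc 1 (i0.val + 1), i1 * X) + t)
    (hdfill : ∀ i0 c, d (.filler i0 c) =
      (i0.val + 1) * W + (∑ i1 ∈ Finset.Icc 1 (i0.val + 1), i1 * X) + t)
    (σ : WJob n fc ≃ Fin (Fintype.card (WJob n fc)))
    (𝒥 : Finset (WJob n fc))
    (hcard : 𝒥.card = n * fc + i)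
    (hearly : ∀ J ∈ 𝒥, wCompletion p σ J ≤ d J)
    (hby : ∀ J ∈ 𝒥, wCompletion p σ J ≤ n * W + (∑ i1 ∈ Finset.Icc 1 n, i1 * X) + t) :
    (n * W + ∑ i1 ∈ Finset.Icc 1 i, i1 * X ≤ ∑ J ∈ 𝒥, p J) ∧
    (2 * (∑ J ∈ 𝒥, p J) < 2 * (n * W + ∑ i1 ∈ Finset.Icc 1 i, i1 * X) + X →
      (∀ i0 : Fin n, i0.val + 1 ≤ i → ((WJob.star i0 ∈ 𝒥) ↔ (WJob.nstar i0 ∉ 𝒥))) ∧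
      (∀ i0 c, WJob.filler i0 c ∈ 𝒥)) :=
  stmt13_general n t fc i hn hi1 hin a Z Y X W hZ hY hX hW hfc p d hpstar hpnstar hpfill hpbig
    hpnbig hdstar hdnstar hdfill σ 𝒥 hcard hearly hby
end
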